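/- arXiv:2308.00850 — 2 statements merged into one kernel-verified Lean document; each statement's English description precedes it below -/
import Mathlib

section
/- For every binary word w, there exists a shortest antipalindrome having w as a prefix (the antipalindromic closure w^E), and it has the form w^E = v y E(v), where w = v y and y is the longest (possibly empty) antipalindromic suffix of w. -/
/-!
Write `w = v y` with `y` the longest antipalindromic suffix. Then `v y E(v)` is an antipalindrome
with prefix `w`. Conversely, if `w t` is an antipalindrome with `|t| < |v|`, then removing the first
and the last `|t|` letters of `w t` leaves an antipalindrome, which is a suffix of `w` longer than
`y`; so no antipalindrome with prefix `w` is shorter than `v y E(v)`.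
-/

def occursAt (f w : List Bool) (i : ℕ) : Prop :=
  i + f.length ≤ w.length ∧ (w.drop i).take f.length = f

def IsAttractor (w : List Bool) (Γ : Finset ℕ) : Prop :=
  (∀ γ ∈ Γ, γ < w.length) ∧
  ∀ f : List Bool, f ≠ [] → f <:+: w →
    ∃ i, occursAt f w i ∧ ∃ γ ∈ Γ, i ≤ γ ∧ γ < i + f.length

def Emap (w : List Bool) : List Bool := (w.reverse).map (fun b => !b)

def IsPal (w : List Bool) : Prop := w.reverse = w

def IsAntipal (w : List Bool) : Prop := Emap w = w

def IsPalClosure (w p : List Bool) : Prop :=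
  IsPal p ∧ w <+: p ∧ ∀ q, IsPal q → w <+: q → p.length ≤ q.length

def IsAntipalClosure (w p : List Bool) : Prop :=
  IsAntipal p ∧ w <+: p ∧ ∀ q, IsAntipal q → w <+: q → p.length ≤ q.length

theorem Emap_append (a b : List Bool) : Emap (a ++ b) = Emap b ++ Emap a := by
  simp [Emap]

theorem Emap_Emap (a : List Bool) : Emap (Emap a) = a := by
  simp [Emap, Function.comp_def]

theorem length_Emap (a : List Bool) : (Emap a).length = a.length := by
  simp [Emap]

theorem List.exists_longest_suffix {α : Type*} (P : List α → Prop) (h_nil : P []) (w : List α) :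
    ∃ v y, w = v ++ y ∧ P y ∧ ∀ s, s <:+ w → P s → s.length ≤ y.length := by
  induction w with
  | nil => exact ⟨[], [], rfl, h_nil, fun s hs _ => hs.length_le⟩
  | cons a w ih =>
    by_cases hw : P (a :: w)
    · exact ⟨[], a :: w, rfl, hw, fun s hs _ => hs.length_le⟩
    · obtain ⟨v, y, rfl, hy, hmax⟩ := ih
      refine ⟨a :: v, y, rfl, hy, fun s hs hPs => ?_⟩
      rcases List.suffix_cons_iff.mp hs with rfl | hs
      · exact absurd hPs hw
      · exact hmax s hs hPs

theorem IsAntipal.append_Emap {y : List Bool} (hy : IsAntipal y) (v : List Bool) :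
    IsAntipal (v ++ y ++ Emap v) := by
  unfold IsAntipal at *
  rw [Emap_append, Emap_append, Emap_Emap, hy, List.append_assoc]

theorem IsAntipal.of_append_append {x z t : List Bool} (h : IsAntipal (x ++ z ++ t))
    (hlen : x.length = t.length) : IsAntipal z := by
  unfold IsAntipal at *
  rw [Emap_append, Emap_append, List.append_assoc] at h
  have hzt : Emap z ++ Emap x = z ++ t :=
    (List.append_inj h (by rw [length_Emap, hlen])).2
  exact (List.append_inj' hzt (by rw [length_Emap, hlen])).1

theorem length_add_le_of_isAntipal_of_prefix {w v y q : List Bool} (hw : w = v ++ y)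
    (hmax : ∀ s, s <:+ w → IsAntipal s → s.length ≤ y.length)
    (hq : IsAntipal q) (hpre : w <+: q) : w.length + v.length ≤ q.length := by
  obtain ⟨t, rfl⟩ := hpre
  have hwlen : w.length = v.length + y.length := by rw [hw, List.length_append]
  by_contra! hshort
  rw [List.length_append] at hshort
  have ht : t.length ≤ w.length := by omega
  rw [← List.take_append_drop t.length w] at hq
  have hcenter : IsAntipal (w.drop t.length) :=
    hq.of_append_append (List.length_take_of_le ht)
  have := hmax _ (List.drop_suffix _ _) hcenter
  rw [List.length_drop] at this
  omega

theorem stmt_5 (w : List Bool) :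
    ∃ p, IsAntipalClosure w p ∧
      ∃ v y, w = v ++ y ∧ IsAntipal y ∧
        (∀ s, s <:+ w → IsAntipal s → s.length ≤ y.length) ∧
        p = v ++ y ++ Emap v := by
  obtain ⟨v, y, hw, hy, hmax⟩ := List.exists_longest_suffix IsAntipal rfl w
  refine ⟨v ++ y ++ Emap v, ⟨hy.append_Emap v, ⟨Emap v, by rw [hw]⟩, fun q hq hpre => ?_⟩,
    v, y, hw, hy, hmax, rfl⟩
  have := length_add_le_of_isAntipal_of_prefix hw hmax hq hpre
  simp only [List.length_append, length_Emap, hw] at this ⊢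
  omega
end

section
/- Let v be a non-empty palindromic prefix of a standard Sturmian sequence obtained by iterated palindromic closure (v = w_n where w_0 = ε and w_{k+1} = (w_k δ_{k+1})^R for letters δ_k ∈ {0,1}). For each letter a occurring in v, let r_a be the maximal length of a palindromic prefix p of v such that pa is a prefix of v. Then Γ = {r_a : a occurs in v} is a string attractor of v, and it is of minimum size (its size equals the number of distinct letters of v). -/
/-!
Induction along the closure sequence. Let `u = w k` (a palindrome), `a = δ (k + 1)` and
`W = w (k + 1)`. Then `W` starts with `u a` and ends with `u`, and its only palindromic prefixes
are `W` and those of `u`; hence `r_a(W) = |u|` and `r_b(W) = r_b(u)` for `b ≠ a`. If `a` occurs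
in `u`, writing `u = p a d` with `|p| = r_a(u)` shows `|W| + r_a(u) = 2|u|`, so position `r_a(u)`
of the copy of `u` ending `W` is position `|u|` of `W`. A factor of `W` either covers position
`|u|`, or lies inside one of the two copies of `u`, where the induction hypothesis yields a covering
occurrence that transfers to `W`. Minimality is clear: an attractor needs a position for each letter.
-/

section Occurrences

variable {f u w y t : List Bool} {i : ℕ}

theorem occursAt_iff : occursAt f w i ↔ ∃ s t, w = s ++ f ++ t ∧ s.length = i := by
  constructor
  · rintro ⟨hlen, htake⟩
    refine ⟨w.take i, w.drop (i + f.length), ?_, by simp; omega⟩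
    conv_lhs => rw [← List.take_append_drop i w, ← List.take_append_drop f.length (w.drop i)]
    rw [htake, List.drop_drop, List.append_assoc]
  · rintro ⟨s, t, rfl, rfl⟩
    refine ⟨by simp, ?_⟩
    rw [List.append_assoc, List.drop_left, List.take_left]

theorem exists_occursAt_of_infix (h : f <:+: w) : ∃ i, occursAt f w i := by
  obtain ⟨s, t, rfl⟩ := h
  exact ⟨s.length, occursAt_iff.2 ⟨s, t, rfl, rfl⟩⟩

theorem occursAt.infix (h : occursAt f w i) : f <:+: w := by
  obtain ⟨s, t, rfl, -⟩ := occursAt_iff.1 h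
  exact ⟨s, t, rfl⟩

theorem occursAt.append_right (h : occursAt f u i) : occursAt f (u ++ t) i := by
  obtain ⟨s, t', rfl, hs⟩ := occursAt_iff.1 h
  exact occursAt_iff.2 ⟨s, t' ++ t, by simp, hs⟩

theorem occursAt.append_left (h : occursAt f u i) : occursAt f (y ++ u) (y.length + i) := by
  obtain ⟨s, t', rfl, rfl⟩ := occursAt_iff.1 h
  exact occursAt_iff.2 ⟨y ++ s, t', by simp, by simp⟩

theorem occursAt.of_append_right (h : occursAt f (u ++ t) i) (hi : i + f.length ≤ u.length) :
    occursAt f u i := by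
  refine ⟨hi, ?_⟩
  have h2 := h.2
  rwa [List.drop_append_of_le_length (by omega),
    List.take_append_of_le_length (by simp; omega)] at h2

theorem occursAt.of_append_left (h : occursAt f (y ++ u) i) (hi : y.length ≤ i) :
    occursAt f u (i - y.length) := by
  obtain ⟨h1, h2⟩ := h
  refine ⟨by simp at h1; omega, ?_⟩
  rwa [List.drop_append, List.drop_eq_nil_of_le hi, List.nil_append] at h2

theorem occursAt_singleton_iff {b : Bool} : occursAt [b] w i ↔ w[i]? = some b := by
  rw [occursAt, List.length_singleton, List.take_one, List.head?_drop]
  constructor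
  · rintro ⟨-, h⟩
    simpa using h
  · intro h
    refine ⟨?_, by simp [h]⟩
    have := (List.getElem?_eq_some_iff.1 h).1
    omega

end Occurrences

theorem eq_of_append_singleton_prefix {u p q : List Bool} {a b : Bool}
    (ha : p ++ [a] <+: u) (hb : q ++ [b] <+: u) (hl : p.length = q.length) : a = b := by
  have hpq := (List.prefix_of_prefix_length_le ha hb (by simp [hl])).eq_of_length (by simp [hl])
  simpa using List.append_inj_right hpq hl

theorem IsPal.of_prefix_of_suffix {u x : List Bool} (hu : IsPal u) (hpre : x <+: u)
    (hsuf : x <:+ u) : IsPal x := by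
  have hrev : x.reverse <+: u := by
    have h := hsuf.reverse
    rwa [show u.reverse = u from hu] at h
  exact (List.prefix_of_prefix_length_le hrev hpre (by simp)).eq_of_length (by simp)

def IsMaxPalPrefixBefore (v : List Bool) (a : Bool) (ρ : ℕ) : Prop :=
  (∃ p, IsPal p ∧ p ++ [a] <+: v ∧ p.length = ρ) ∧
  (∀ p, IsPal p → p ++ [a] <+: v → p.length ≤ ρ)

def maxPalPositions (v : List Bool) : Set ℕ := {ρ | ∃ a, IsMaxPalPrefixBefore v a ρ}

namespace IsMaxPalPrefixBefore

variable {v : List Bool} {a b : Bool} {ρ ρ' : ℕ}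

theorem unique (h : IsMaxPalPrefixBefore v a ρ) (h' : IsMaxPalPrefixBefore v a ρ') : ρ = ρ' := by
  obtain ⟨⟨p, hp, hpv, rfl⟩, hmax⟩ := h
  obtain ⟨⟨p', hp', hpv', rfl⟩, hmax'⟩ := h'
  exact le_antisymm (hmax' p hp hpv) (hmax p' hp' hpv')

theorem inj (h : IsMaxPalPrefixBefore v a ρ) (h' : IsMaxPalPrefixBefore v b ρ) : a = b := by
  obtain ⟨⟨p, -, hpv, hp⟩, -⟩ := h
  obtain ⟨⟨p', -, hpv', hp'⟩, -⟩ := h'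
  exact eq_of_append_singleton_prefix hpv hpv' (hp.trans hp'.symm)

theorem mem (h : IsMaxPalPrefixBefore v a ρ) : a ∈ v := by
  obtain ⟨⟨p, -, hpv, -⟩, -⟩ := h
  exact hpv.subset (by simp)

theorem lt_length (h : IsMaxPalPrefixBefore v a ρ) : ρ < v.length := by
  obtain ⟨⟨p, -, hpv, rfl⟩, -⟩ := h
  simpa using hpv.length_le

end IsMaxPalPrefixBefore

theorem exists_replicate_not_append_prefix {v : List Bool} {a : Bool} (ha : a ∈ v) :
    ∃ k, List.replicate k (!a) ++ [a] <+: v := by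
  induction v with
  | nil => simp at ha
  | cons c v ih =>
    by_cases hc : c = a
    · exact ⟨0, by simp [hc]⟩
    · obtain ⟨k, hk⟩ := ih (by simpa [Ne.symm hc] using ha)
      refine ⟨k + 1, ?_⟩
      rw [show c = !a by cases a <;> cases c <;> simp_all, List.replicate_succ, List.cons_append]
      exact List.cons_prefix_cons.2 ⟨rfl, hk⟩

theorem exists_isMaxPalPrefixBefore {v : List Bool} {a : Bool} (ha : a ∈ v) :
    ∃ ρ, IsMaxPalPrefixBefore v a ρ := by
  classical
  set S := v.inits.toFinset.filter fun p => IsPal p ∧ p ++ [a] <+: v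
  have hS : ∀ p, p ∈ S ↔ IsPal p ∧ p ++ [a] <+: v := fun p => by
    simpa [S] using fun _ h => (List.prefix_append p [a]).trans h
  obtain ⟨k, hk⟩ := exists_replicate_not_append_prefix ha
  obtain ⟨p, hpS, hmax⟩ := S.exists_max_image List.length
    ⟨_, (hS _).2 ⟨List.reverse_replicate, hk⟩⟩
  obtain ⟨hp, hpv⟩ := (hS p).1 hpS
  exact ⟨p.length, ⟨p, hp, hpv, rfl⟩, fun q hq hqv => hmax q ((hS q).2 ⟨hq, hqv⟩)⟩

namespace IsPalClosure

variable {u W p : List Bool} {a b : Bool} {ρ : ℕ}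

theorem suffix (hu : IsPal u) (hW : IsPalClosure (u ++ [a]) W) : u <:+ W := by
  obtain ⟨hWpal, ⟨t, ht⟩, -⟩ := hW
  refine ⟨t.reverse ++ [a], ?_⟩
  rw [← hWpal, ← ht]
  simpa using hu.symm

theorem length_le (hu : IsPal u) (hW : IsPalClosure (u ++ [a]) W) :
    W.length ≤ 2 * u.length + 1 := by
  have hpal : IsPal (u ++ [a] ++ u) := by
    show (u ++ [a] ++ u).reverse = _
    simp [show u.reverse = u from hu]
  have := hW.2.2 _ hpal (List.prefix_append _ _)
  simp at this
  omega

theorem length_add_le (hu : IsPal u) (hW : IsPalClosure (u ++ [a]) W) (hp : IsPal p)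
    (hpu : p ++ [a] <+: u) : W.length + p.length ≤ 2 * u.length := by
  obtain ⟨d, hd⟩ := hpu
  have hu' : d.reverse ++ [a] ++ p = u := by
    rw [← hu, ← hd]
    simpa using hp.symm
  have hpal : IsPal (u ++ [a] ++ d) := by
    calc (u ++ [a] ++ d).reverse = d.reverse ++ [a] ++ (p ++ [a] ++ d) := by
          simp [show u.reverse = u from hu, hd]
      _ = (d.reverse ++ [a] ++ p) ++ [a] ++ d := by simp
      _ = u ++ [a] ++ d := by rw [hu']
  have h1 := hW.2.2 _ hpal (List.prefix_append _ _)
  have h2 := congrArg List.length hd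
  simp at h1 h2
  omega

theorem exists_length_add_eq (hu : IsPal u) (hW : IsPalClosure (u ++ [a]) W)
    (hle : W.length ≤ 2 * u.length) :
    ∃ p, IsPal p ∧ p ++ [a] <+: u ∧ 2 * u.length ≤ W.length + p.length := by
  obtain ⟨y, hy⟩ := hW.suffix hu
  obtain ⟨t, ht⟩ := hW.2.1
  have hyl : y.length + u.length = W.length := by simpa using congrArg List.length hy
  have hsplit : u = u.drop y.length ++ [a] ++ t := by
    have h := congrArg (List.drop y.length) ht
    rw [← hy, List.drop_left, List.append_assoc, List.drop_append_of_le_length (by omega)] at h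
    simpa using h.symm
  have hpre : u.drop y.length ++ [a] <+: u := ⟨t, hsplit.symm⟩
  refine ⟨_, hu.of_prefix_of_suffix ((List.prefix_append _ _).trans hpre) (List.drop_suffix _ _),
    hpre, ?_⟩
  simp
  omega

theorem prefix_of_isPal (hW : IsPalClosure (u ++ [a]) W) (hp : IsPal p) (hpW : p ++ [b] <+: W) :
    p <+: u := by
  have hpW' := (List.prefix_append p [b]).trans hpW
  by_contra hpu
  have hlt : u.length < p.length := by
    by_contra! hle
    exact hpu (List.prefix_of_prefix_length_le hpW' ((List.prefix_append _ _).trans hW.2.1) hle)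
  have h1 := hW.2.2 p hp (List.prefix_of_prefix_length_le hW.2.1 hpW' (by simp; omega))
  have h2 := hpW.length_le
  simp at h2
  omega

theorem isMaxPalPrefixBefore_length (hu : IsPal u) (hW : IsPalClosure (u ++ [a]) W) :
    IsMaxPalPrefixBefore W a u.length :=
  ⟨⟨u, hu, hW.2.1, rfl⟩, fun _ hp hpW => (hW.prefix_of_isPal hp hpW).length_le⟩

theorem isMaxPalPrefixBefore_of_ne (hW : IsPalClosure (u ++ [a]) W) (hb : b ≠ a)
    (h : IsMaxPalPrefixBefore u b ρ) : IsMaxPalPrefixBefore W b ρ := by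
  obtain ⟨⟨p, hp, hpu, hpρ⟩, hmax⟩ := h
  have huW := (List.prefix_append u [a]).trans hW.2.1
  refine ⟨⟨p, hp, hpu.trans huW, hpρ⟩, fun q hq hqW => hmax q hq ?_⟩
  have hqu := (hW.prefix_of_isPal hq hqW).length_le
  rcases hqu.lt_or_eq with hlt | heq
  · exact List.prefix_of_prefix_length_le hqW huW (by simp; omega)
  · exact absurd (eq_of_append_singleton_prefix hqW hW.2.1 heq) hb

theorem length_add_eq (hu : IsPal u) (hW : IsPalClosure (u ++ [a]) W)
    (ha : IsMaxPalPrefixBefore u a ρ) : W.length + ρ = 2 * u.length := by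
  obtain ⟨⟨p, hp, hpu, rfl⟩, hmax⟩ := ha
  have hle := hW.length_add_le hu hp hpu
  obtain ⟨q, hq, hqu, hq2⟩ := hW.exists_length_add_eq hu (by omega)
  have := hmax q hq hqu
  omega

end IsPalClosure

def CoversFactors (w : List Bool) (S : Set ℕ) : Prop :=
  ∀ f : List Bool, f ≠ [] → f <:+: w →
    ∃ i, occursAt f w i ∧ ∃ γ ∈ S, i ≤ γ ∧ γ < i + f.length

theorem CoversFactors.mono {w : List Bool} {S T : Set ℕ} (h : CoversFactors w S) (hST : S ⊆ T) :
    CoversFactors w T := fun f hf hfw => by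
  obtain ⟨i, hi, γ, hγ, h1, h2⟩ := h f hf hfw
  exact ⟨i, hi, γ, hST hγ, h1, h2⟩

namespace IsPalClosure

variable {u W f : List Bool} {a : Bool}

theorem exists_cover_of_occursAt (hu : IsPal u) (hW : IsPalClosure (u ++ [a]) W)
    (ih : CoversFactors u (maxPalPositions u)) (hf : f ≠ []) {j : ℕ} (hj : occursAt f u j) :
    ∃ i, occursAt f W i ∧ ∃ γ ∈ maxPalPositions W, i ≤ γ ∧ γ < i + f.length := by
  obtain ⟨i, hi, γ, ⟨b, hbγ⟩, h1, h2⟩ := ih f hf hj.infix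
  by_cases hba : b = a
  · subst hba
    -- shift to the copy of `u` ending `W`, where the position `γ` becomes `u.length`
    obtain ⟨y, rfl⟩ := hW.suffix hu
    have hlen := hW.length_add_eq hu hbγ
    simp only [List.length_append] at hlen
    exact ⟨y.length + i, hi.append_left, u.length, ⟨b, hW.isMaxPalPrefixBefore_length hu⟩,
      by omega, by omega⟩
  · obtain ⟨t, rfl⟩ := hW.2.1
    exact ⟨i, (hi.append_right (t := [a])).append_right, γ,
      ⟨b, hW.isMaxPalPrefixBefore_of_ne hba hbγ⟩, h1, h2⟩

theorem coversFactors_maxPalPositions (hu : IsPal u) (hW : IsPalClosure (u ++ [a]) W)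
    (ih : CoversFactors u (maxPalPositions u)) : CoversFactors W (maxPalPositions W) := by
  intro f hf hfW
  obtain ⟨i, hi⟩ := exists_occursAt_of_infix hfW
  by_cases hcross : i ≤ u.length ∧ u.length < i + f.length
  · exact ⟨i, hi, u.length, ⟨a, hW.isMaxPalPrefixBefore_length hu⟩, hcross⟩
  have hflen : 0 < f.length := List.length_pos_iff.2 hf
  by_cases hpre : i + f.length ≤ u.length
  · obtain ⟨t, rfl⟩ := hW.2.1
    rw [List.append_assoc] at hi
    exact hW.exists_cover_of_occursAt hu ih hf (hi.of_append_right hpre)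
  · have hWlen := hW.length_le hu
    obtain ⟨y, rfl⟩ := hW.suffix hu
    simp only [List.length_append] at hWlen
    exact hW.exists_cover_of_occursAt hu ih hf (hi.of_append_left (by omega))

end IsPalClosure

theorem IsAttractor.card_toFinset_le {v : List Bool} {Γ : Finset ℕ} (hΓ : IsAttractor v Γ) :
    v.toFinset.card ≤ Γ.card := by
  classical
  have hsub : v.toFinset ⊆ Γ.image fun γ => v.getD γ false := by
    intro b hb
    obtain ⟨i, hi, γ, hγ, h1, h2⟩ := hΓ.2 [b] (by simp)
      ((List.singleton_infix_iff _ _).2 (List.mem_toFinset.1 hb))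
    obtain rfl : γ = i := by simp at h2; omega
    exact Finset.mem_image.2 ⟨γ, hγ, by simp [occursAt_singleton_iff.1 hi]⟩
  exact (Finset.card_le_card hsub).trans Finset.card_image_le

theorem coversFactors_maxPalPositions_of_iteratedPalClosure {δ : ℕ → Bool} {w : ℕ → List Bool}
    (h0 : w 0 = []) (hclos : ∀ k, IsPalClosure (w k ++ [δ (k + 1)]) (w (k + 1))) (n : ℕ) :
    CoversFactors (w n) (maxPalPositions (w n)) := by
  induction n with
  | zero =>
    rw [h0]
    exact fun f hf hfw => absurd (List.eq_nil_of_infix_nil hfw) hf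
  | succ n ih =>
    have hpal : IsPal (w n) := by
      cases n with
      | zero => rw [h0]; rfl
      | succ k => exact (hclos k).1
    exact (hclos n).coversFactors_maxPalPositions hpal ih

theorem stmt_10_general (δ : ℕ → Bool) (w : ℕ → List Bool) (n : ℕ)
    (h0 : w 0 = [])
    (hclos : ∀ k, IsPalClosure (w k ++ [δ (k + 1)]) (w (k + 1)))
    (v : List Bool) (hv : v = w n)
    (r : Bool → ℕ)
    (hr : ∀ a ∈ v.toFinset,
      (∃ p, IsPal p ∧ (p ++ [a]) <+: v ∧ p.length = r a) ∧
      (∀ p, IsPal p → (p ++ [a]) <+: v → p.length ≤ r a)) :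
    IsAttractor v (v.toFinset.image r) ∧
    (v.toFinset.image r).card = v.toFinset.card ∧
    ∀ Γ : Finset ℕ, IsAttractor v Γ → (v.toFinset.image r).card ≤ Γ.card := by
  have hr' : ∀ a ∈ v.toFinset, IsMaxPalPrefixBefore v a (r a) := hr
  have hcard : (v.toFinset.image r).card = v.toFinset.card :=
    Finset.card_image_of_injOn fun a ha b hb hab =>
      (hr' a ha).inj (hab ▸ hr' b hb)
  have hsub : maxPalPositions v ⊆ v.toFinset.image r := by
    rintro ρ ⟨a, ha⟩
    have hav : a ∈ v.toFinset := List.mem_toFinset.2 ha.mem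
    exact Finset.mem_image.2 ⟨a, hav, (hr' a hav).unique ha⟩
  have hcover : CoversFactors v (maxPalPositions v) :=
    hv ▸ coversFactors_maxPalPositions_of_iteratedPalClosure h0 hclos n
  refine ⟨⟨?_, hcover.mono hsub⟩, hcard, fun Γ hΓ => hcard ▸ hΓ.card_toFinset_le⟩
  simp only [Finset.mem_image]
  rintro _ ⟨a, ha, rfl⟩
  exact (hr' a ha).lt_length

theorem stmt_10 (δ : ℕ → Bool) (w : ℕ → List Bool) (n : ℕ)
    (h0 : w 0 = [])
    (hclos : ∀ k, IsPalClosure (w k ++ [δ (k + 1)]) (w (k + 1)))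
    (v : List Bool) (hv : v = w n) (hne : v ≠ [])
    (r : Bool → ℕ)
    (hr : ∀ a ∈ v.toFinset,
      (∃ p, IsPal p ∧ (p ++ [a]) <+: v ∧ p.length = r a) ∧
      (∀ p, IsPal p → (p ++ [a]) <+: v → p.length ≤ r a)) :
    IsAttractor v (v.toFinset.image r) ∧
    (v.toFinset.image r).card = v.toFinset.card ∧
    ∀ Γ : Finset ℕ, IsAttractor v Γ → (v.toFinset.image r).card ≤ Γ.card :=
  stmt_10_general δ w n h0 hclos v hv r hr
end
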